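/- arXiv:1812.02138 — 3 statements merged into one kernel-verified Lean document; each statement's English description precedes it below -/
import Mathlib

section
/- (Svaiter's lemma, part (b).) Let H be a real Hilbert space, T : H ⇒ H a maximal monotone operator, and let z̃, v, w ∈ H, λ > 0, ε ≥ 0, σ ∈ [0,1) satisfy v ∈ T^{ε}(z̃) and ‖λv + z̃ − w‖² + 2λε ≤ σ²‖z̃ − w‖². Let τ ∈ [0,1] and set z₊ := w − τλv. Then for every z* with 0 ∈ T(z*): ‖w − z*‖² − ‖z₊ − z*‖² ≥ (1−σ²)τ‖z̃ − w‖² + τ(1−τ)‖λv‖². -/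
open Filter Finset Topology
open scoped RealInnerProductSpace

/-- A set-valued operator `T : H ⇒ H` is monotone. -/
def IsMonotoneOp {H : Type*} [NormedAddCommGroup H] [InnerProductSpace ℝ H]
    (T : H → Set H) : Prop :=
  ∀ ⦃z z' v v' : H⦄, v ∈ T z → v' ∈ T z' → 0 ≤ ⟪z - z', v - v'⟫

/-- `T` is maximal monotone: it is monotone and its graph is not properly contained in the
graph of any other monotone operator. -/
def IsMaximalMonotoneOp {H : Type*} [NormedAddCommGroup H] [InnerProductSpace ℝ H]
    (T : H → Set H) : Prop :=
  IsMonotoneOp T ∧ ∀ S : H → Set H, IsMonotoneOp S → (∀ z, T z ⊆ S z) → ∀ z, S z ⊆ T z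

/-- The ε-enlargement `T^ε` of a set-valued operator `T`. -/
def enl {H : Type*} [NormedAddCommGroup H] [InnerProductSpace ℝ H]
    (T : H → Set H) (ε : ℝ) (z : H) : Set H :=
  {v | ∀ z' v', v' ∈ T z' → ⟪z - z', v - v'⟫ ≥ -ε}

/-!
Testing the enlargement against a zero `z*` of `T` gives `⟪z̃ - z*, λv⟫ ≥ -λε`; combined with the
relative error criterion this yields `2⟪w - z*, λv⟫ ≥ ‖λv‖² + (1 - σ²)‖z̃ - w‖²`, so `z*` lies
well beyond the hyperplane through `w` with normal `λv`. The step `z₊ = w - τλv` gains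
`2τ⟪w - z*, λv⟫ - τ²‖λv‖²` in squared distance to `z*`.
-/

section InnerProductSpace

variable {H : Type*} [NormedAddCommGroup H] [InnerProductSpace ℝ H]

theorem neg_le_inner_of_mem_enl_of_zero_mem {T : H → Set H} {ε : ℝ} {z zs v : H}
    (hv : v ∈ enl T ε z) (hzs : (0 : H) ∈ T zs) : -ε ≤ ⟪z - zs, v⟫ := by
  simpa using hv zs 0 hzs

theorem norm_sq_sub_norm_sub_smul_sq (d u : H) (t : ℝ) :
    ‖d‖ ^ 2 - ‖d - t • u‖ ^ 2 = 2 * t * ⟪d, u⟫ - t ^ 2 * ‖u‖ ^ 2 := by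
  rw [norm_sub_sq_real, real_inner_smul_right, norm_smul, mul_pow, Real.norm_eq_abs, sq_abs]
  ring

theorem norm_sq_add_le_two_inner_of_relative_error {d u e : H} {c σ : ℝ}
    (hsep : -c ≤ ⟪e + d, u⟫) (herr : ‖u + e‖ ^ 2 + 2 * c ≤ σ ^ 2 * ‖e‖ ^ 2) :
    ‖u‖ ^ 2 + (1 - σ ^ 2) * ‖e‖ ^ 2 ≤ 2 * ⟪d, u⟫ := by
  rw [norm_add_sq_real] at herr
  rw [inner_add_left, real_inner_comm] at hsep
  linarith

end InnerProductSpace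

theorem stmt3_general
    {H : Type*} [NormedAddCommGroup H] [InnerProductSpace ℝ H]
    (T : H → Set H)
    (ztil v w : H) (lam ε σ τ : ℝ)
    (hlam : 0 < lam)
    (hτ0 : 0 ≤ τ)
    (hin : v ∈ enl T ε ztil)
    (herr : ‖lam • v + ztil - w‖ ^ 2 + 2 * lam * ε ≤ σ ^ 2 * ‖ztil - w‖ ^ 2)
    (zp : H) (hzp : zp = w - (τ * lam) • v) :
    ∀ zs : H, (0 : H) ∈ T zs →
      ‖w - zs‖ ^ 2 - ‖zp - zs‖ ^ 2 ≥
        (1 - σ ^ 2) * τ * ‖ztil - w‖ ^ 2 + τ * (1 - τ) * ‖lam • v‖ ^ 2 := by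
  intro zs hzs
  have hsep : -(lam * ε) ≤ ⟪(ztil - w) + (w - zs), lam • v⟫ := by
    have := mul_le_mul_of_nonneg_left (neg_le_inner_of_mem_enl_of_zero_mem hin hzs) hlam.le
    rw [sub_add_sub_cancel, real_inner_smul_right]
    linarith
  have hkey := norm_sq_add_le_two_inner_of_relative_error hsep
    (by simpa only [add_sub_assoc, mul_assoc] using herr)
  have hstep : zp - zs = (w - zs) - τ • lam • v := by rw [hzp, mul_smul]; abel
  rw [hstep, norm_sq_sub_norm_sub_smul_sq]
  linarith [mul_le_mul_of_nonneg_left hkey hτ0]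

/-- Svaiter's lemma, part (b). -/
theorem stmt3
    {H : Type*} [NormedAddCommGroup H] [InnerProductSpace ℝ H] [CompleteSpace H]
    (T : H → Set H) (hT : IsMaximalMonotoneOp T)
    (ztil v w : H) (lam ε σ τ : ℝ)
    (hlam : 0 < lam) (hε : 0 ≤ ε) (hσ0 : 0 ≤ σ) (hσ1 : σ < 1)
    (hτ0 : 0 ≤ τ) (hτ1 : τ ≤ 1)
    (hin : v ∈ enl T ε ztil)
    (herr : ‖lam • v + ztil - w‖ ^ 2 + 2 * lam * ε ≤ σ ^ 2 * ‖ztil - w‖ ^ 2)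
    (zp : H) (hzp : zp = w - (τ * lam) • v) :
    ∀ zs : H, (0 : H) ∈ T zs →
      ‖w - zs‖ ^ 2 - ‖zp - zs‖ ^ 2 ≥
        (1 - σ ^ 2) * τ * ‖ztil - w‖ ^ 2 + τ * (1 - τ) * ‖lam • v‖ ^ 2 :=
  stmt3_general T ztil v w lam ε σ τ hlam hτ0 hin herr zp hzp
end

section
/- Let {z_k}, {λ_k}, {α_k} be generated by Algorithm 1 (inertial under-relaxed HPE) for a maximal monotone operator T on a real Hilbert space H with T⁻¹(0) := {z : 0 ∈ T(z)} nonempty, with parameters α, σ ∈ [0,1), τ ∈ (0,1]. If Σ_{k=0}^∞ α_k ‖z_k − z_{k−1}‖² < +∞ and there is λ̲ > 0 with λ_k ≥ λ̲ for all k ≥ 1, then {z_k} converges weakly to a point z with 0 ∈ T(z). -/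
open Filter Finset Topology
open scoped RealInnerProductSpace

/-!
For a zero `p` of `T`, the error criterion together with `⟪z̃ₖ - p, vₖ⟫ ≥ -εₖ` gives the descent
estimate `‖zₖ₊₁ - p‖² + τ(1 - σ²)‖z̃ₖ₊₁ - wₖ‖² ≤ ‖wₖ - p‖²`; expanding the extrapolation step turns
it into an inertial quasi-Fejér inequality for `‖zₖ - p‖²` whose error term is summable by
hypothesis. So `‖zₖ - p‖` converges and the residuals `‖z̃ₖ₊₁ - wₖ‖` are square-summable, which with
`λₖ ≥ λ̲` forces `vₖ → 0`, `εₖ → 0` and `z̃ₖ - zₖ → 0`. Weak cluster points of `(zₖ)` are then zeros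
of `T` by the weak-strong closedness of the graph of a maximal monotone operator, and Opial's
lemma gives weak convergence of the whole sequence.
-/

section RealSequences

theorem summable_of_succ_le_mul_add {p s : ℕ → ℝ} {α : ℝ} (hα1 : α < 1)
    (hp : ∀ k, 0 ≤ p k) (hs0 : ∀ k, 0 ≤ s k) (hs : Summable s)
    (hle : ∀ k, p (k + 1) ≤ α * p k + s k) : Summable p := by
  refine summable_of_sum_range_le hp (c := (p 0 + ∑' k, s k) / (1 - α)) fun n => ?_
  rw [le_div_iff₀ (by linarith)]
  have hmono : ∑ k ∈ range n, p k ≤ ∑ k ∈ range (n + 1), p k :=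
    sum_le_sum_of_subset_of_nonneg (range_subset_range.mpr n.le_succ) fun k _ _ => hp k
  have hstep : ∑ k ∈ range (n + 1), p k ≤ p 0 + α * ∑ k ∈ range n, p k + ∑' k, s k :=
    calc ∑ k ∈ range (n + 1), p k = p 0 + ∑ k ∈ range n, p (k + 1) := by
          rw [sum_range_succ', add_comm]
      _ ≤ p 0 + ∑ k ∈ range n, (α * p k + s k) := by gcongr with k; exact hle k
      _ ≤ p 0 + α * ∑ k ∈ range n, p k + ∑' k, s k := by
          rw [sum_add_distrib, ← mul_sum, add_assoc]
          gcongr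
          exact hs.sum_le_tsum _ fun k _ => hs0 k
  nlinarith

theorem exists_tendsto_of_succ_le_add_summable {h p : ℕ → ℝ} (hh : ∀ k, 0 ≤ h k)
    (hp : ∀ k, 0 ≤ p k) (hps : Summable p) (hle : ∀ k, h (k + 1) ≤ h k + p k) :
    ∃ L, Tendsto h atTop (𝓝 L) := by
  set u : ℕ → ℝ := fun n => h n - ∑ k ∈ range n, p k
  have hanti : Antitone u := antitone_nat_of_succ_le fun n => by
    simp only [u, sum_range_succ]
    linarith [hle n]
  have hbdd : BddBelow (Set.range u) :=
    ⟨-∑' k, p k, by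
      rintro _ ⟨n, rfl⟩
      linarith [hh n, hps.sum_le_tsum (range n) fun k _ => hp k]⟩
  refine ⟨(⨅ n, u n) + ∑' k, p k, ?_⟩
  simpa [u] using (tendsto_atTop_ciInf hanti hbdd).add hps.hasSum.tendsto_sum_nat

theorem exists_tendsto_and_summable_of_inertial_le {h r s : ℕ → ℝ} {α c : ℝ} (hα0 : 0 ≤ α)
    (hα1 : α < 1) (hc : 0 < c) (hh : ∀ k, 0 ≤ h k) (hr : ∀ k, 0 ≤ r k) (hs0 : ∀ k, 0 ≤ s k)
    (hs : Summable s) (hle : ∀ k, h (k + 1) + c * r k ≤ h k + α * max (h k - h (k - 1)) 0 + s k) :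
    (∃ L, Tendsto h atTop (𝓝 L)) ∧ Summable r := by
  set p : ℕ → ℝ := fun k => max (h k - h (k - 1)) 0
  have hp : ∀ k, 0 ≤ p k := fun k => le_max_right _ _
  have hstep : ∀ k, h (k + 1) ≤ h k + (α * p k + s k) := fun k => by
    linarith [hle k, mul_nonneg hc.le (hr k)]
  have hps : Summable p := summable_of_succ_le_mul_add hα1 hp hs0 hs fun k =>
    max_le (by simpa using by linarith [hstep k]) (by linarith [mul_nonneg hα0 (hp k), hs0 k])
  have hq : Summable fun k => α * p k + s k := (hps.mul_left α).add hs
  have hq0 : ∀ k, 0 ≤ α * p k + s k := fun k => by linarith [mul_nonneg hα0 (hp k), hs0 k]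
  refine ⟨exists_tendsto_of_succ_le_add_summable hh hq0 hq hstep, ?_⟩
  refine summable_of_sum_range_le hr (c := (h 0 + ∑' k, (α * p k + s k)) / c) fun n => ?_
  rw [le_div_iff₀ hc]
  have htel : (∑ k ∈ range n, r k) * c ≤ ∑ k ∈ range n, ((h k - h (k + 1)) + (α * p k + s k)) := by
    rw [sum_mul]
    exact sum_le_sum fun k _ => by linarith [hle k]
  rw [sum_add_distrib, sum_range_sub'] at htel
  linarith [hh n, hq.sum_le_tsum (range n) fun k _ => hq0 k]

end RealSequences

section Weak

open Set

variable {H : Type*} [NormedAddCommGroup H] [InnerProductSpace ℝ H]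

def WeakTendsto (u : ℕ → H) (p : H) : Prop :=
  ∀ y, Tendsto (fun k => ⟪u k, y⟫) atTop (𝓝 ⟪p, y⟫)

theorem WeakTendsto.of_tendsto_norm_sub {u x : ℕ → H} {p : H} (h : WeakTendsto u p)
    (hx : Tendsto (fun k => ‖x k - u k‖) atTop (𝓝 0)) : WeakTendsto x p := by
  intro y
  have hdiff : Tendsto (fun k => ⟪x k - u k, y⟫) atTop (𝓝 0) :=
    squeeze_zero_norm (fun k => by simpa using abs_real_inner_le_norm (x k - u k) y)
      (by simpa using hx.mul_const ‖y‖)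
  simpa [inner_sub_left] using hdiff.add (h y)

theorem WeakTendsto.exists_norm_le [CompleteSpace H] {u : ℕ → H} {p : H} (h : WeakTendsto u p) :
    ∃ C, ∀ n, ‖u n‖ ≤ C := by
  have hpt : ∀ y, ∃ C, ∀ n, ‖innerSL ℝ (u n) y‖ ≤ C := fun y => by
    obtain ⟨C, hC⟩ := isBounded_iff_forall_norm_le.mp (Metric.isBounded_range_of_tendsto _ (h y))
    exact ⟨C, fun n => hC _ ⟨n, rfl⟩⟩
  obtain ⟨C, hC⟩ := banach_steinhaus hpt
  exact ⟨C, fun n => by simpa only [innerSL_apply_norm] using hC n⟩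

theorem eq_of_inner_sub_eq {p q : H} (h : ⟪p, q - p⟫ = ⟪q, q - p⟫) : p = q := by
  have : ⟪q - p, q - p⟫ = 0 := by rw [inner_sub_left, h, sub_self]
  exact (sub_eq_zero.mp (inner_self_eq_zero.mp this)).symm

/-- Banach–Alaoglu in the separable closed span of the sequence, read back through the Riesz
representation. -/
theorem exists_strictMono_weakTendsto [CompleteSpace H] {u : ℕ → H} {M : ℝ}
    (hM : ∀ n, ‖u n‖ ≤ M) : ∃ p φ, StrictMono φ ∧ WeakTendsto (u ∘ φ) p := by
  set E := (Submodule.span ℝ (range u)).topologicalClosure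
  have huE : ∀ n, u n ∈ E := fun n =>
    Submodule.le_topologicalClosure _ (Submodule.subset_span ⟨n, rfl⟩)
  have : TopologicalSpace.SeparableSpace E :=
    ((countable_range u).isSeparable.span.closure.mono
      (Submodule.topologicalClosure_coe _).le).separableSpace
  have : CompleteSpace E := Submodule.isClosed_topologicalClosure _ |>.completeSpace_coe
  let f : ℕ → WeakDual ℝ E := fun n =>
    StrongDual.toWeakDual (InnerProductSpace.toDual ℝ E ⟨u n, huE n⟩)
  have hf : ∀ n, f n ∈ WeakDual.toStrongDual ⁻¹' Metric.closedBall 0 M := fun n => by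
    change dist (InnerProductSpace.toDual ℝ E ⟨u n, huE n⟩) 0 ≤ M
    rw [dist_zero_right, LinearIsometryEquiv.norm_map]
    exact hM n
  obtain ⟨ℓ, -, φ, hφ, hlim⟩ := WeakDual.isSeqCompact_closedBall ℝ E 0 M hf
  refine ⟨(InnerProductSpace.toDual ℝ E).symm (WeakDual.toStrongDual ℓ), φ, hφ, fun y => ?_⟩
  have := ((WeakDual.eval_continuous (E.orthogonalProjectionOnto y)).tendsto ℓ).comp hlim
  simp only [← Submodule.inner_orthogonalProjectionOnto_eq_of_mem_left,
    InnerProductSpace.toDual_symm_apply]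
  exact this.congr fun n => by simp [f, InnerProductSpace.toDual_apply_apply]

theorem tendsto_inner_sub_of_tendsto_norm_sub_sq {u : ℕ → H} {p q : H} {Lp Lq : ℝ}
    (hp : Tendsto (fun k => ‖u k - p‖ ^ 2) atTop (𝓝 Lp))
    (hq : Tendsto (fun k => ‖u k - q‖ ^ 2) atTop (𝓝 Lq)) :
    Tendsto (fun k => ⟪u k, q - p⟫) atTop (𝓝 ((Lp - Lq + (‖q‖ ^ 2 - ‖p‖ ^ 2)) / 2)) := by
  refine (((hp.sub hq).add_const _).div_const 2).congr fun k => ?_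
  rw [norm_sub_sq_real, norm_sub_sq_real, inner_sub_right]
  ring

theorem eq_of_weakTendsto_comp_of_tendsto_norm_sub_sq {u : ℕ → H} {φ ψ : ℕ → ℕ}
    (hφ : Tendsto φ atTop atTop) (hψ : Tendsto ψ atTop atTop) {p q : H} {Lp Lq : ℝ}
    (hLp : Tendsto (fun k => ‖u k - p‖ ^ 2) atTop (𝓝 Lp))
    (hLq : Tendsto (fun k => ‖u k - q‖ ^ 2) atTop (𝓝 Lq))
    (hup : WeakTendsto (u ∘ φ) p) (huq : WeakTendsto (u ∘ ψ) q) : p = q := by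
  have hlim := tendsto_inner_sub_of_tendsto_norm_sub_sq hLp hLq
  exact eq_of_inner_sub_eq <| (tendsto_nhds_unique (hup (q - p)) (hlim.comp hφ)).trans
    (tendsto_nhds_unique (huq (q - p)) (hlim.comp hψ)).symm

/-- Opial's lemma. -/
theorem exists_mem_weakTendsto_of_tendsto_norm_sub_sq [CompleteSpace H] {u : ℕ → H} {S : Set H}
    (hS : S.Nonempty) (hdist : ∀ p ∈ S, ∃ L, Tendsto (fun k => ‖u k - p‖ ^ 2) atTop (𝓝 L))
    (hclust : ∀ φ : ℕ → ℕ, Tendsto φ atTop atTop → ∀ p, WeakTendsto (u ∘ φ) p → p ∈ S) :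
    ∃ p ∈ S, WeakTendsto u p := by
  obtain ⟨p₀, hp₀⟩ := hS
  obtain ⟨C, hC⟩ := (hdist p₀ hp₀).choose_spec.bddAbove_range
  have hbound : ∀ n, ‖u n‖ ≤ ‖p₀‖ + √C := fun n =>
    (norm_le_norm_add_norm_sub' _ _).trans
      (add_le_add le_rfl (abs_norm (u n - p₀) ▸ Real.abs_le_sqrt (hC ⟨n, rfl⟩)))
  have hcluster : ∀ φ : ℕ → ℕ, Tendsto φ atTop atTop →
      ∃ p ∈ S, ∃ ψ : ℕ → ℕ, StrictMono ψ ∧ WeakTendsto (u ∘ φ ∘ ψ) p := fun φ hφ => by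
    obtain ⟨p, ψ, hψ, hp⟩ := exists_strictMono_weakTendsto fun n => hbound (φ n)
    exact ⟨p, hclust _ (hφ.comp hψ.tendsto_atTop) p hp, ψ, hψ, hp⟩
  obtain ⟨p, hp, ψ, hψ, hup⟩ := hcluster id tendsto_id
  refine ⟨p, hp, fun y => tendsto_of_subseq_tendsto fun ns hns => ?_⟩
  obtain ⟨q, hq, χ, hχ, huq⟩ := hcluster ns hns
  obtain rfl : p = q := eq_of_weakTendsto_comp_of_tendsto_norm_sub_sq hψ.tendsto_atTop
    (hns.comp hχ.tendsto_atTop) (hdist p hp).choose_spec (hdist q hq).choose_spec hup huq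
  exact ⟨χ, huq y⟩

end Weak

section MaximalMonotone

variable {H : Type*} [NormedAddCommGroup H] [InnerProductSpace ℝ H] {T : H → Set H}

theorem IsMaximalMonotoneOp.mem_of_forall_inner_nonneg (hT : IsMaximalMonotoneOp T) {q u : H}
    (h : ∀ z' u', u' ∈ T z' → 0 ≤ ⟪q - z', u - u'⟫) : u ∈ T q := by
  let S : H → Set H := fun z => {u' | u' ∈ T z ∨ (z = q ∧ u' = u)}
  have hS : IsMonotoneOp S := by
    rintro z z' v v' (hv | ⟨rfl, rfl⟩) (hv' | ⟨rfl, rfl⟩)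
    · exact hT.1 hv hv'
    · rw [← inner_neg_neg, neg_sub, neg_sub]
      exact h z v hv
    · exact h z' v' hv'
    · simp
  exact hT.2 S hS (fun z _ hv => Or.inl hv) q (Or.inr ⟨rfl, rfl⟩)

theorem IsMaximalMonotoneOp.mem_of_weakTendsto_of_mem_enl [CompleteSpace H]
    (hT : IsMaximalMonotoneOp T) {x u : ℕ → H} {ε : ℕ → ℝ} {q u₀ : H} (hx : WeakTendsto x q)
    (hu : Tendsto u atTop (𝓝 u₀)) (hε : Tendsto ε atTop (𝓝 0))
    (hmem : ∀ᶠ n in atTop, u n ∈ enl T (ε n) (x n)) : u₀ ∈ T q := by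
  obtain ⟨C, hC⟩ := hx.exists_norm_le
  refine hT.mem_of_forall_inner_nonneg fun z' u' hu' => ?_
  have hsmall : Tendsto (fun n => ⟪x n - z', u n - u₀⟫) atTop (𝓝 0) := by
    refine squeeze_zero_norm (a := fun n => (C + ‖z'‖) * ‖u n - u₀‖) (fun n => ?_) ?_
    · rw [Real.norm_eq_abs]
      refine (abs_real_inner_le_norm _ _).trans (mul_le_mul_of_nonneg_right ?_ (norm_nonneg _))
      exact (norm_sub_le _ _).trans (add_le_add_left (hC n) _)
    · simpa using (tendsto_iff_norm_sub_tendsto_zero.mp hu).const_mul (C + ‖z'‖)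
  have hlim : Tendsto (fun n => ⟪x n - z', u n - u'⟫) atTop (𝓝 ⟪q - z', u₀ - u'⟫) := by
    have := (hsmall.add ((hx (u₀ - u')).sub_const ⟪z', u₀ - u'⟫))
    rw [zero_add, ← inner_sub_left] at this
    refine this.congr fun n => ?_
    rw [← inner_sub_left, ← inner_add_right, sub_add_sub_cancel]
  have hε' : Tendsto (fun n => -ε n) atTop (𝓝 0) := by simpa using hε.neg
  exact le_of_tendsto_of_tendsto hε' hlim (hmem.mono fun n hn => hn z' u' hu')

end MaximalMonotone

section InertialHPE

variable {H : Type*} [NormedAddCommGroup H] [InnerProductSpace ℝ H] {T : H → Set H}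

theorem norm_add_smul_sub_sub_sq_le {z z' p : H} {a : ℝ} (ha0 : 0 ≤ a) (ha1 : a ≤ 1) :
    ‖z + a • (z - z') - p‖ ^ 2 ≤
      ‖z - p‖ ^ 2 + a * (‖z - p‖ ^ 2 - ‖z' - p‖ ^ 2) + 2 * a * ‖z - z'‖ ^ 2 := by
  have hx : z + a • (z - z') - p = (z - p) + a • ((z - p) - (z' - p)) := by module
  rw [hx, ← sub_sub_sub_cancel_right z z' p]
  generalize z - p = x
  generalize z' - p = y
  have hpar : 2 * ⟪x, x - y⟫ = ‖x‖ ^ 2 - ‖y‖ ^ 2 + ‖x - y‖ ^ 2 := by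
    rw [norm_sub_sq_real, inner_sub_right, real_inner_self_eq_norm_sq]
    ring
  calc ‖x + a • (x - y)‖ ^ 2 = ‖x‖ ^ 2 + a * (2 * ⟪x, x - y⟫) + a ^ 2 * ‖x - y‖ ^ 2 := by
        rw [norm_add_sq_real, real_inner_smul_right, norm_smul, mul_pow, Real.norm_eq_abs, sq_abs]
        ring
    _ = ‖x‖ ^ 2 + a * (‖x‖ ^ 2 - ‖y‖ ^ 2) + (a + a ^ 2) * ‖x - y‖ ^ 2 := by
        rw [hpar]
        ring
    _ ≤ ‖x‖ ^ 2 + a * (‖x‖ ^ 2 - ‖y‖ ^ 2) + 2 * a * ‖x - y‖ ^ 2 := by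
        gcongr
        nlinarith

theorem norm_sub_smul_sub_sq_add_le_of_mem_enl {σ τ lam ε : ℝ} {w zt v p : H} (hτ0 : 0 ≤ τ)
    (hτ1 : τ ≤ 1) (hlam : 0 ≤ lam) (hv : v ∈ enl T ε zt)
    (herr : ‖lam • v + zt - w‖ ^ 2 + 2 * lam * ε ≤ σ ^ 2 * ‖zt - w‖ ^ 2) (hp : (0 : H) ∈ T p) :
    ‖w - (τ * lam) • v - p‖ ^ 2 + τ * (1 - σ ^ 2) * ‖zt - w‖ ^ 2 ≤ ‖w - p‖ ^ 2 := by
  have hmono : -ε ≤ ⟪zt - p, v⟫ := by simpa using hv p 0 hp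
  have hcriterion : lam ^ 2 * ‖v‖ ^ 2 + (1 - σ ^ 2) * ‖zt - w‖ ^ 2 + 2 * lam * ε ≤
      2 * lam * ⟪w - zt, v⟫ := by
    have hexp : ‖lam • v + zt - w‖ ^ 2 =
        lam ^ 2 * ‖v‖ ^ 2 - 2 * lam * ⟪w - zt, v⟫ + ‖w - zt‖ ^ 2 := by
      rw [add_sub_assoc, ← neg_sub w zt, ← sub_eq_add_neg, norm_sub_sq_real, norm_smul,
        real_inner_smul_left, mul_pow, Real.norm_eq_abs, sq_abs, real_inner_comm]
      ring
    rw [hexp, norm_sub_rev] at herr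
    linarith
  have hdescent : lam ^ 2 * ‖v‖ ^ 2 + (1 - σ ^ 2) * ‖zt - w‖ ^ 2 ≤ 2 * lam * ⟪w - p, v⟫ := by
    rw [← sub_add_sub_cancel w zt p, inner_add_left]
    nlinarith [mul_le_mul_of_nonneg_left hmono (by positivity : 0 ≤ 2 * lam)]
  have hexp : ‖w - (τ * lam) • v - p‖ ^ 2 =
      ‖w - p‖ ^ 2 - τ * (2 * lam * ⟪w - p, v⟫) + τ ^ 2 * (lam ^ 2 * ‖v‖ ^ 2) := by
    rw [sub_right_comm, norm_sub_sq_real, real_inner_smul_right, norm_smul, mul_pow,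
      Real.norm_eq_abs, sq_abs]
    ring
  rw [hexp]
  nlinarith [mul_le_mul_of_nonneg_left hdescent hτ0,
    mul_nonneg (mul_nonneg hτ0 (sub_nonneg.mpr hτ1)) (by positivity : 0 ≤ lam ^ 2 * ‖v‖ ^ 2)]

theorem norm_smul_le_of_hpe_error {σ lam ε : ℝ} {w zt v : H} (hσ : 0 ≤ σ) (hlamε : 0 ≤ lam * ε)
    (herr : ‖lam • v + zt - w‖ ^ 2 + 2 * lam * ε ≤ σ ^ 2 * ‖zt - w‖ ^ 2) :
    ‖lam • v‖ ≤ (1 + σ) * ‖zt - w‖ := by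
  have hsq : ‖lam • v + zt - w‖ ^ 2 ≤ (σ * ‖zt - w‖) ^ 2 := by
    rw [mul_pow]
    linarith
  have hle := (pow_le_pow_iff_left₀ (norm_nonneg _) (by positivity) two_ne_zero).mp hsq
  calc ‖lam • v‖ = ‖(lam • v + zt - w) - (zt - w)‖ := by congr 1; abel
    _ ≤ σ * ‖zt - w‖ + ‖zt - w‖ := (norm_sub_le _ _).trans (add_le_add hle le_rfl)
    _ = (1 + σ) * ‖zt - w‖ := by ring

end InertialHPE

section Iterates

variable {H : Type*} [NormedAddCommGroup H] [InnerProductSpace ℝ H] {T : H → Set H}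
  {σ τ : ℝ} {z w ztil v : ℕ → H} {ε lam αs : ℕ → ℝ}

/-- The relations defining the iterates of Algorithm 1; at `k = 0` the truncated `k - 1` gives
`z (0 - 1) = z 0`, the paper's `z₋₁ = z₀`. -/
structure IsInertialHPE (T : H → Set H) (σ τ : ℝ) (z w ztil v : ℕ → H) (ε lam αs : ℕ → ℝ) :
    Prop where
  extrapolate : ∀ k, w k = z k + αs k • (z k - z (k - 1))
  mem_enl : ∀ k, 1 ≤ k → v k ∈ enl T (ε k) (ztil k)
  error : ∀ k, 1 ≤ k →
    ‖lam k • v k + ztil k - w (k - 1)‖ ^ 2 + 2 * lam k * ε k ≤ σ ^ 2 * ‖ztil k - w (k - 1)‖ ^ 2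
  update : ∀ k, 1 ≤ k → z k = w (k - 1) - (τ * lam k) • v k

theorem IsInertialHPE.exists_tendsto_norm_sub_sq_and_summable
    (hA : IsInertialHPE T σ τ z w ztil v ε lam αs) {α : ℝ} (hα0 : 0 ≤ α) (hα1 : α < 1)
    (hσ0 : 0 ≤ σ) (hσ1 : σ < 1) (hτ0 : 0 < τ) (hτ1 : τ ≤ 1) (hlam : ∀ k, 1 ≤ k → 0 ≤ lam k)
    (hαs : ∀ k, 0 ≤ αs k ∧ αs k ≤ α) (hsum : Summable fun k => αs k * ‖z k - z (k - 1)‖ ^ 2)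
    {p : H} (hp : (0 : H) ∈ T p) :
    (∃ L, Tendsto (fun k => ‖z k - p‖ ^ 2) atTop (𝓝 L)) ∧
      Summable fun k => ‖ztil (k + 1) - w k‖ ^ 2 := by
  have hc : 0 < τ * (1 - σ ^ 2) := mul_pos hτ0 (by nlinarith)
  refine exists_tendsto_and_summable_of_inertial_le hα0 hα1 hc (fun k => by positivity)
    (fun k => by positivity) (fun k => by have := (hαs k).1; positivity) (hsum.mul_left 2)
    fun k => ?_
  have hk : 1 ≤ k + 1 := Nat.le_add_left 1 k
  have hhpe := norm_sub_smul_sub_sq_add_le_of_mem_enl hτ0.le hτ1 (hlam (k + 1) hk)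
    (hA.mem_enl (k + 1) hk) (hA.error (k + 1) hk) hp
  have hupdate := hA.update (k + 1) hk
  rw [add_tsub_cancel_right] at hhpe hupdate
  rw [← hupdate] at hhpe
  have hinertial := norm_add_smul_sub_sub_sq_le (z := z k) (z' := z (k - 1)) (p := p) (hαs k).1
    ((hαs k).2.trans hα1.le)
  rw [← hA.extrapolate k] at hinertial
  have hweight : αs k * (‖z k - p‖ ^ 2 - ‖z (k - 1) - p‖ ^ 2) ≤
      α * max (‖z k - p‖ ^ 2 - ‖z (k - 1) - p‖ ^ 2) 0 :=
    (mul_le_mul_of_nonneg_left (le_max_left _ _) (hαs k).1).trans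
      (mul_le_mul_of_nonneg_right (hαs k).2 (le_max_right _ _))
  linarith

theorem IsInertialHPE.tendsto_v_nhds_zero (hA : IsInertialHPE T σ τ z w ztil v ε lam αs)
    (hσ0 : 0 ≤ σ) (hεnn : ∀ k, 1 ≤ k → 0 ≤ ε k) {lamlb : ℝ} (hlb : 0 < lamlb)
    (hlam : ∀ k, 1 ≤ k → lamlb ≤ lam k)
    (hρ : Tendsto (fun k => ‖ztil (k + 1) - w k‖) atTop (𝓝 0)) :
    Tendsto v atTop (𝓝 0) := by
  refine (tendsto_add_atTop_iff_nat 1).mp (squeeze_zero_norm (fun k => ?_)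
    (by simpa using hρ.const_mul ((1 + σ) / lamlb)))
  have hk : 1 ≤ k + 1 := Nat.le_add_left 1 k
  have hlamk := hlam (k + 1) hk
  have hbound := norm_smul_le_of_hpe_error hσ0
    (mul_nonneg (hlb.le.trans hlamk) (hεnn (k + 1) hk)) (hA.error (k + 1) hk)
  rw [add_tsub_cancel_right, norm_smul, Real.norm_eq_abs, abs_of_pos (hlb.trans_le hlamk)]
    at hbound
  rw [div_mul_eq_mul_div, le_div_iff₀ hlb]
  nlinarith [norm_nonneg (v (k + 1))]

theorem IsInertialHPE.tendsto_ε_nhds_zero (hA : IsInertialHPE T σ τ z w ztil v ε lam αs)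
    (hεnn : ∀ k, 1 ≤ k → 0 ≤ ε k) {lamlb : ℝ} (hlb : 0 < lamlb)
    (hlam : ∀ k, 1 ≤ k → lamlb ≤ lam k)
    (hρ : Tendsto (fun k => ‖ztil (k + 1) - w k‖) atTop (𝓝 0)) :
    Tendsto ε atTop (𝓝 0) := by
  refine (tendsto_add_atTop_iff_nat 1).mp
    (squeeze_zero (fun k => hεnn (k + 1) (Nat.le_add_left 1 k)) (fun k => ?_)
      (by simpa using (hρ.pow 2).const_mul (σ ^ 2 / (2 * lamlb))))
  have hk : 1 ≤ k + 1 := Nat.le_add_left 1 k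
  have herr := hA.error (k + 1) hk
  rw [add_tsub_cancel_right] at herr
  rw [div_mul_eq_mul_div, le_div_iff₀ (by positivity)]
  nlinarith [hlam (k + 1) hk, hεnn (k + 1) hk,
    sq_nonneg ‖lam (k + 1) • v (k + 1) + ztil (k + 1) - w k‖]

theorem IsInertialHPE.tendsto_norm_ztil_sub_z_nhds_zero
    (hA : IsInertialHPE T σ τ z w ztil v ε lam αs) (hσ0 : 0 ≤ σ) (hτ0 : 0 ≤ τ) (hτ1 : τ ≤ 1)
    (hεnn : ∀ k, 1 ≤ k → 0 ≤ ε k) (hlam : ∀ k, 1 ≤ k → 0 ≤ lam k)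
    (hρ : Tendsto (fun k => ‖ztil (k + 1) - w k‖) atTop (𝓝 0)) :
    Tendsto (fun k => ‖ztil k - z k‖) atTop (𝓝 0) := by
  refine (tendsto_add_atTop_iff_nat 1).mp (squeeze_zero (fun k => norm_nonneg _) (fun k => ?_)
    (by simpa using hρ.const_mul (2 + σ)))
  have hk : 1 ≤ k + 1 := Nat.le_add_left 1 k
  have hbound := norm_smul_le_of_hpe_error hσ0 (mul_nonneg (hlam (k + 1) hk) (hεnn (k + 1) hk))
    (hA.error (k + 1) hk)
  have hupdate := hA.update (k + 1) hk
  rw [add_tsub_cancel_right] at hbound hupdate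
  have hsplit :
      ztil (k + 1) - z (k + 1) = (ztil (k + 1) - w k) + τ • (lam (k + 1) • v (k + 1)) := by
    rw [hupdate, smul_smul]
    abel
  calc ‖ztil (k + 1) - z (k + 1)‖
      ≤ ‖ztil (k + 1) - w k‖ + τ * ‖lam (k + 1) • v (k + 1)‖ := by
        rw [hsplit]
        exact (norm_add_le _ _).trans_eq (by rw [norm_smul, Real.norm_of_nonneg hτ0])
    _ ≤ ‖ztil (k + 1) - w k‖ + 1 * ((1 + σ) * ‖ztil (k + 1) - w k‖) := by gcongr
    _ = (2 + σ) * ‖ztil (k + 1) - w k‖ := by ring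

end Iterates

theorem stmt10_general
    {H : Type*} [NormedAddCommGroup H] [InnerProductSpace ℝ H] [CompleteSpace H]
    (T : H → Set H) (hT : IsMaximalMonotoneOp T)
    (α σ τ : ℝ) (hα0 : 0 ≤ α) (hα1 : α < 1) (hσ0 : 0 ≤ σ) (hσ1 : σ < 1)
    (hτ0 : 0 < τ) (hτ1 : τ ≤ 1)
    (z w ztil v : ℕ → H) (ε lam αs : ℕ → ℝ)
    (hαs : ∀ k, 0 ≤ αs k ∧ αs k ≤ α)
    (hw : ∀ k, w k = z k + αs k • (z k - z (k - 1)))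
    (hεnn : ∀ k, 1 ≤ k → 0 ≤ ε k)
    (hin : ∀ k, 1 ≤ k → v k ∈ enl T (ε k) (ztil k))
    (herr : ∀ k, 1 ≤ k →
      ‖lam k • v k + ztil k - w (k - 1)‖ ^ 2 + 2 * lam k * ε k ≤
        σ ^ 2 * ‖ztil k - w (k - 1)‖ ^ 2)
    (hz : ∀ k, 1 ≤ k → z k = w (k - 1) - (τ * lam k) • v k)
    (hzero : ∃ zs : H, (0 : H) ∈ T zs)
    (hsum : Summable (fun k => αs k * ‖z k - z (k - 1)‖ ^ 2))
    (lamlb : ℝ) (hlb : 0 < lamlb) (hlam2 : ∀ k, 1 ≤ k → lamlb ≤ lam k) :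
    ∃ zinf : H, (0 : H) ∈ T zinf ∧
      ∀ y : H, Tendsto (fun k => ⟪z k, y⟫) atTop (𝓝 ⟪zinf, y⟫) := by
  have hA : IsInertialHPE T σ τ z w ztil v ε lam αs := ⟨hw, hin, herr, hz⟩
  have hlam : ∀ k, 1 ≤ k → 0 ≤ lam k := fun k hk => hlb.le.trans (hlam2 k hk)
  have hfejer {p : H} (hp : (0 : H) ∈ T p) :=
    hA.exists_tendsto_norm_sub_sq_and_summable hα0 hα1 hσ0 hσ1 hτ0 hτ1 hlam hαs hsum hp
  obtain ⟨zs, hzs⟩ := hzero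
  have hρ : Tendsto (fun k => ‖ztil (k + 1) - w k‖) atTop (𝓝 0) := by
    simpa using (hfejer hzs).2.tendsto_atTop_zero.sqrt
  have hv := hA.tendsto_v_nhds_zero hσ0 hεnn hlb hlam2 hρ
  have hε := hA.tendsto_ε_nhds_zero hεnn hlb hlam2 hρ
  have hzz := hA.tendsto_norm_ztil_sub_z_nhds_zero hσ0 hτ0.le hτ1 hεnn hlam hρ
  exact exists_mem_weakTendsto_of_tendsto_norm_sub_sq (S := {p | (0 : H) ∈ T p}) ⟨zs, hzs⟩
    (fun p hp => (hfejer hp).1) fun φ hφ q hq =>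
      hT.mem_of_weakTendsto_of_mem_enl (hq.of_tendsto_norm_sub (hzz.comp hφ)) (hv.comp hφ)
        (hε.comp hφ) ((hφ.eventually_ge_atTop 1).mono fun n hn => hin _ hn)

/-- weak convergence of Algorithm 1 under the summability condition.
Indexing convention: `z k` is the paper's `z_k` for `k ≥ 0`, the paper's `z_{−1} = z₀` being
encoded by truncated subtraction; weak convergence is expressed via inner products. -/
theorem stmt10
    {H : Type*} [NormedAddCommGroup H] [InnerProductSpace ℝ H] [CompleteSpace H]
    (T : H → Set H) (hT : IsMaximalMonotoneOp T)
    (α σ τ : ℝ) (hα0 : 0 ≤ α) (hα1 : α < 1) (hσ0 : 0 ≤ σ) (hσ1 : σ < 1)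
    (hτ0 : 0 < τ) (hτ1 : τ ≤ 1)
    (z w ztil v : ℕ → H) (ε lam αs : ℕ → ℝ)
    (hαs : ∀ k, 0 ≤ αs k ∧ αs k ≤ α)
    (hw : ∀ k, w k = z k + αs k • (z k - z (k - 1)))
    (hlam : ∀ k, 1 ≤ k → 0 < lam k)
    (hεnn : ∀ k, 1 ≤ k → 0 ≤ ε k)
    (hin : ∀ k, 1 ≤ k → v k ∈ enl T (ε k) (ztil k))
    (herr : ∀ k, 1 ≤ k →
      ‖lam k • v k + ztil k - w (k - 1)‖ ^ 2 + 2 * lam k * ε k ≤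
        σ ^ 2 * ‖ztil k - w (k - 1)‖ ^ 2)
    (hz : ∀ k, 1 ≤ k → z k = w (k - 1) - (τ * lam k) • v k)
    (hzero : ∃ zs : H, (0 : H) ∈ T zs)
    (hsum : Summable (fun k => αs k * ‖z k - z (k - 1)‖ ^ 2))
    (lamlb : ℝ) (hlb : 0 < lamlb) (hlam2 : ∀ k, 1 ≤ k → lamlb ≤ lam k) :
    ∃ zinf : H, (0 : H) ∈ T zinf ∧
      ∀ y : H, Tendsto (fun k => ⟪z k, y⟫) atTop (𝓝 ⟪zinf, y⟫) :=
  stmt10_general T hT α σ τ hα0 hα1 hσ0 hσ1 hτ0 hτ1 z w ztil v ε lam αs hαs hw hεnn hin herr hz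
    hzero hsum lamlb hlb hlam2
end

section
/- Let {z_k}, {w_k}, {z̃_k}, {v_k}, {λ_k}, {α_k} be generated by Algorithm 1 (inertial under-relaxed HPE) for a maximal monotone operator T on a real Hilbert space H with T⁻¹(0) nonempty, and assume Assumption (A) holds. Let η := 2/((1+σ)τ) − 1 and q(t) := (η−1)t² − (1+2η)t + η, and let z* satisfy 0 ∈ T(z*). Then for all k ≥ 1: ‖z_k − z*‖² + Σ_{j=1}^k τ · max{ητ‖λ_j v_j‖², (1−σ²)‖z̃_j − w_{j−1}‖²} ≤ (1 + 2α(1+α)/((1−α)² q(α))) ‖z₀ − z*‖². -/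
open Filter Finset Topology
open scoped RealInnerProductSpace

/-!
Write `h k = ‖z k - z*‖²`, `u k = ‖z k - z (k-1)‖²` and `s k` for the `k`-th summand. One relaxed
HPE step from the extrapolated point `w k` gives `h (k+1) + s (k+1) ≤ ‖w k - z*‖²`, and the
extrapolation costs at most `αₖ (h k - h (k-1)) + α (1+α) u k`; since the step length is
`τ λ ‖v‖`, also `η (1-α) (u (k+1) - α u k) ≤ s (k+1)`. The scalar recursion is then summed as
for inertial proximal methods (Alvarez–Attouch): Abel summation with the nondecreasing `αₖ`
bounds `(1-α) q(α) ∑ u` by `h 0`, and the positive parts of `h k - h (k-1)` sum to at most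
`α (1+α) / (1-α) · ∑ u`. The choice of `τ` makes `β'` a root of `q`, whence `q(α) > 0`.
-/

section InertialSequences

variable {α A c : ℝ} {αs h u s : ℕ → ℝ}

lemma sum_range_le_sum_range_succ {f : ℕ → ℝ} (hf : ∀ n, 0 ≤ f n) (hf0 : f 0 = 0) (n : ℕ) :
    ∑ i ∈ range n, f i ≤ ∑ i ∈ range n, f (i + 1) := by
  calc ∑ i ∈ range n, f i ≤ ∑ i ∈ range (n + 1), f i :=
        sum_le_sum_of_subset_of_nonneg (range_subset_range.2 n.le_succ) fun i _ _ => hf i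
    _ = ∑ i ∈ range n, f (i + 1) := by rw [sum_range_succ', hf0, add_zero]

lemma sum_range_mul_sub_le (hαs : Monotone αs) (hαs0 : 0 ≤ αs 0) (hh : ∀ n, 0 ≤ h n) (n : ℕ) :
    ∑ i ∈ range (n + 1), αs i * (h i - h (i - 1)) ≤ αs n * h n := by
  induction n with
  | zero => simpa using mul_nonneg hαs0 (hh 0)
  | succ n ih =>
    have hweight := mul_le_mul_of_nonneg_right (hαs n.le_succ) (hh n)
    rw [sum_range_succ, Nat.add_sub_cancel]
    linarith

lemma one_sub_mul_le_of_le_add_mul {b : ℝ} (hα0 : 0 ≤ α) (hα1 : α ≤ 1) (h0 : 0 ≤ h 0)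
    (hb : h 0 ≤ b) (hrec : ∀ n, h (n + 1) ≤ b + α * h n) (n : ℕ) :
    (1 - α) * h n ≤ b := by
  induction n with
  | zero => nlinarith
  | succ n ih => nlinarith [hrec n, mul_le_mul_of_nonneg_left (hrec n) (sub_nonneg.2 hα1)]

lemma one_sub_mul_sum_le_of_le_mul_add {p a : ℕ → ℝ} (hα0 : 0 ≤ α) (hp : ∀ n, 0 ≤ p n)
    (hp0 : p 0 = 0) (hrec : ∀ n, p (n + 1) ≤ α * p n + a n) (n : ℕ) :
    (1 - α) * ∑ i ∈ range n, p (i + 1) ≤ ∑ i ∈ range n, a i := by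
  suffices h : (1 - α) * ∑ i ∈ range n, p (i + 1) + α * p n ≤ ∑ i ∈ range n, a i by
    nlinarith [mul_nonneg hα0 (hp n)]
  induction n with
  | zero => simp [hp0]
  | succ n ih =>
    rw [sum_range_succ, sum_range_succ]
    linarith [hrec n]

lemma mul_le_mul_posPart {a : ℝ} (ha : 0 ≤ a ∧ a ≤ α) (x : ℝ) : a * x ≤ α * x⁺ :=
  (mul_le_mul_of_nonneg_left (le_posPart x) ha.1).trans
    (mul_le_mul_of_nonneg_right ha.2 (posPart_nonneg x))

lemma inertial_telescope
    (hdesc : ∀ n, h (n + 1) + s (n + 1) ≤ h n + αs n * (h n - h (n - 1)) + A * u n) (n : ℕ) :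
    h n + ∑ i ∈ range n, s (i + 1) ≤
      h 0 + ∑ i ∈ range n, αs i * (h i - h (i - 1)) + A * ∑ i ∈ range n, u i := by
  have hsum := sum_le_sum fun i (_ : i ∈ range n) => hdesc i
  have htelescope := sum_range_sub h n
  simp only [sum_add_distrib, ← mul_sum] at hsum
  rw [sum_sub_distrib] at htelescope
  linarith

lemma inertial_sum_disp_le (hα0 : 0 ≤ α) (hα1 : α < 1) (hA : 0 ≤ A)
    (hQ : 0 < c * (1 - α) - A) (hαs : ∀ n, 0 ≤ αs n ∧ αs n ≤ α) (hmono : Monotone αs)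
    (hh : ∀ n, 0 ≤ h n) (hu : ∀ n, 0 ≤ u n) (hu0 : u 0 = 0)
    (hdesc : ∀ n, h (n + 1) + s (n + 1) ≤ h n + αs n * (h n - h (n - 1)) + A * u n)
    (hdisp : ∀ n, c * (u (n + 1) - α * u n) ≤ s (n + 1)) (n : ℕ) :
    (1 - α) * ((c * (1 - α) - A) * ∑ i ∈ range n, u (i + 1)) ≤ h 0 := by
  set Q := c * (1 - α) - A
  have hc : 0 ≤ c := by nlinarith
  have hrec : ∀ n, h (n + 1) + Q * ∑ i ∈ range (n + 1), u (i + 1) ≤ h 0 + α * h n := by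
    intro n
    have hsdisp : c * (∑ i ∈ range (n + 1), u (i + 1) - α * ∑ i ∈ range (n + 1), u i) ≤
        ∑ i ∈ range (n + 1), s (i + 1) := by
      rw [mul_sum, ← sum_sub_distrib, mul_sum]
      exact sum_le_sum fun i _ => by linarith [hdisp i]
    have habel := sum_range_mul_sub_le hmono (hαs 0).1 hh n
    have hshift := mul_le_mul_of_nonneg_left (sum_range_le_sum_range_succ hu hu0 (n + 1))
      (by positivity : 0 ≤ c * α + A)
    have hαn := mul_le_mul_of_nonneg_right (hαs n).2 (hh n)
    linarith [inertial_telescope hdesc (n + 1)]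
  have hbdd := one_sub_mul_le_of_le_add_mul hα0 hα1.le (hh 0) le_rfl fun n => by
    nlinarith [hrec n, sum_nonneg fun i (_ : i ∈ range (n + 1)) => hu (i + 1)]
  rcases n with _ | n
  · simpa using hh 0
  · have hQU : Q * ∑ i ∈ range (n + 1), u (i + 1) ≤ h 0 + α * h n := by
      linarith [hrec n, hh (n + 1)]
    nlinarith [mul_le_mul_of_nonneg_left hQU (sub_nonneg.2 hα1.le),
      mul_le_mul_of_nonneg_left (hbdd n) hα0]

lemma inertial_sum_posPart_le (hα0 : 0 ≤ α) (hA : 0 ≤ A) (hαs : ∀ n, 0 ≤ αs n ∧ αs n ≤ α)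
    (hu : ∀ n, 0 ≤ u n) (hu0 : u 0 = 0) (hs : ∀ n, 0 ≤ s n)
    (hdesc : ∀ n, h (n + 1) + s (n + 1) ≤ h n + αs n * (h n - h (n - 1)) + A * u n) (n : ℕ) :
    (1 - α) * ∑ i ∈ range n, (h (i + 1) - h i)⁺ ≤ A * ∑ i ∈ range n, u (i + 1) := by
  have hrec : ∀ n, (h (n + 1) - h n)⁺ ≤ α * (h n - h (n - 1))⁺ + A * u n := fun n => by
    refine max_le ?_ (add_nonneg (mul_nonneg hα0 (posPart_nonneg _)) (mul_nonneg hA (hu n)))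
    linarith [hdesc n, hs (n + 1), mul_le_mul_posPart (hαs n) (h n - h (n - 1))]
  calc (1 - α) * ∑ i ∈ range n, (h (i + 1) - h i)⁺ ≤ ∑ i ∈ range n, A * u i :=
        one_sub_mul_sum_le_of_le_mul_add (p := fun i => (h i - h (i - 1))⁺) hα0
          (fun _ => posPart_nonneg _) (by simp) hrec n
    _ ≤ A * ∑ i ∈ range n, u (i + 1) := by
        rw [← mul_sum]; exact mul_le_mul_of_nonneg_left (sum_range_le_sum_range_succ hu hu0 n) hA

lemma inertial_descent_bound (hα0 : 0 ≤ α) (hα1 : α < 1) (hA : 0 ≤ A)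
    (hQ : 0 < c * (1 - α) - A) (hαs : ∀ n, 0 ≤ αs n ∧ αs n ≤ α) (hmono : Monotone αs)
    (hh : ∀ n, 0 ≤ h n) (hu : ∀ n, 0 ≤ u n) (hu0 : u 0 = 0) (hs : ∀ n, 0 ≤ s n)
    (hdesc : ∀ n, h (n + 1) + s (n + 1) ≤ h n + αs n * (h n - h (n - 1)) + A * u n)
    (hdisp : ∀ n, c * (u (n + 1) - α * u n) ≤ s (n + 1)) (n : ℕ) :
    h n + ∑ j ∈ Icc 1 n, s j ≤ (1 + A / ((1 - α) ^ 2 * (c * (1 - α) - A))) * h 0 := by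
  have hinc : ∑ i ∈ range n, αs i * (h i - h (i - 1)) ≤ α * ∑ i ∈ range n, (h (i + 1) - h i)⁺ :=
    calc ∑ i ∈ range n, αs i * (h i - h (i - 1)) ≤ α * ∑ i ∈ range n, (h i - h (i - 1))⁺ := by
          rw [mul_sum]; exact sum_le_sum fun i _ => mul_le_mul_posPart (hαs i) _
      _ ≤ α * ∑ i ∈ range n, (h (i + 1) - h i)⁺ := mul_le_mul_of_nonneg_left
          (sum_range_le_sum_range_succ (f := fun i => (h i - h (i - 1))⁺)
            (fun _ => posPart_nonneg _) (by simp) n) hα0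
  have hshift := mul_le_mul_of_nonneg_left (sum_range_le_sum_range_succ hu hu0 n) hA
  have hαP := mul_le_mul_of_nonneg_left (inertial_sum_posPart_le hα0 hA hαs hu hu0 hs hdesc n)
    (by positivity : 0 ≤ α * (1 - α) * (c * (1 - α) - A))
  have hAU := mul_le_mul_of_nonneg_left
    (inertial_sum_disp_le hα0 hα1 hA hQ hαs hmono hh hu hu0 hdesc hdisp n) hA
  have hgain : α * ∑ i ∈ range n, (h (i + 1) - h i)⁺ + A * ∑ i ∈ range n, u (i + 1) ≤
      A / ((1 - α) ^ 2 * (c * (1 - α) - A)) * h 0 := by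
    rw [div_mul_eq_mul_div, le_div_iff₀ (by positivity)]
    linarith
  rw [show ∑ j ∈ Icc 1 n, s j = ∑ i ∈ range n, s (i + 1) by rw [range_eq_Ico, sum_Ico_add']; rfl]
  linarith [inertial_telescope hdesc n]

end InertialSequences

section Extrapolation

variable {H : Type*} [NormedAddCommGroup H] [InnerProductSpace ℝ H]

lemma norm_add_smul_sub_sq (x y : H) (a : ℝ) :
    ‖x + a • (x - y)‖ ^ 2 = (1 + a) * ‖x‖ ^ 2 - a * ‖y‖ ^ 2 + a * (1 + a) * ‖x - y‖ ^ 2 := by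
  rw [norm_add_sq_real, real_inner_smul_right, norm_smul, Real.norm_eq_abs, mul_pow, sq_abs,
    norm_sub_sq_real, inner_sub_right, real_inner_self_eq_norm_sq]
  ring

lemma norm_extrapolate_sub_sq_le {α a : ℝ} (ha0 : 0 ≤ a) (ha : a ≤ α) (x y zs : H) :
    ‖x + a • (x - y) - zs‖ ^ 2 ≤
      ‖x - zs‖ ^ 2 + a * (‖x - zs‖ ^ 2 - ‖y - zs‖ ^ 2) + α * (1 + α) * ‖x - y‖ ^ 2 := by
  have hid := norm_add_smul_sub_sq (x - zs) (y - zs) a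
  rw [sub_sub_sub_cancel_right, sub_add_eq_add_sub] at hid
  rw [hid]
  nlinarith [mul_le_mul_of_nonneg_right (mul_le_mul ha (by linarith : 1 + a ≤ 1 + α)
    (by linarith) (ha0.trans ha)) (sq_nonneg ‖x - y‖)]

lemma one_sub_mul_norm_sub_sq_le {α a : ℝ} (ha0 : 0 ≤ a) (ha : a ≤ α) (hα1 : α < 1)
    (x y x' : H) :
    (1 - α) * ‖x' - x‖ ^ 2 ≤ ‖x' - (x + a • (x - y))‖ ^ 2 + α * (1 - α) * ‖x - y‖ ^ 2 := by
  have htri : ‖x' - x‖ ≤ ‖x' - (x + a • (x - y))‖ + α * ‖x - y‖ :=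
    calc ‖x' - x‖ = ‖(x' - (x + a • (x - y))) + a • (x - y)‖ := by congr 1; abel
      _ ≤ ‖x' - (x + a • (x - y))‖ + a * ‖x - y‖ :=
          (norm_add_le _ _).trans_eq (by rw [norm_smul, Real.norm_eq_abs, abs_of_nonneg ha0])
      _ ≤ ‖x' - (x + a • (x - y))‖ + α * ‖x - y‖ := by gcongr
  have hα0 : 0 ≤ α := ha0.trans ha
  -- `(1 - α) (s + α t)² = s² + α (1 - α) t² - α (s - (1 - α) t)²`
  nlinarith [mul_le_mul htri htri (norm_nonneg _) (by positivity),
    sq_nonneg (‖x' - (x + a • (x - y))‖ - (1 - α) * ‖x - y‖)]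

lemma relaxed_step_displacement_le {α a η τ lam : ℝ} (hη0 : 0 ≤ η) (hτ0 : 0 ≤ τ) (ha0 : 0 ≤ a)
    (ha : a ≤ α) (hα1 : α < 1) (x y v : H) :
    η * (1 - α) * (‖x + a • (x - y) - (τ * lam) • v - x‖ ^ 2 - α * ‖x - y‖ ^ 2) ≤
      τ * (η * τ * ‖lam • v‖ ^ 2) := by
  have hdisp := one_sub_mul_norm_sub_sq_le ha0 ha hα1 x y (x + a • (x - y) - (τ * lam) • v)
  have hstep : ‖x + a • (x - y) - (τ * lam) • v - (x + a • (x - y))‖ = τ * ‖lam • v‖ := by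
    rw [sub_sub_cancel_left, norm_neg, mul_smul, norm_smul, Real.norm_eq_abs, abs_of_nonneg hτ0]
  rw [hstep] at hdisp
  nlinarith [mul_le_mul_of_nonneg_left hdisp hη0]

end Extrapolation

section HPE

variable {H : Type*} [NormedAddCommGroup H] [InnerProductSpace ℝ H] {σ lam ε : ℝ} {w zs zt v : H}

lemma inner_sub_ge_of_mem_enl {T : H → Set H} (hv : v ∈ enl T ε zt) (hzs : (0 : H) ∈ T zs) :
    -ε ≤ ⟪zt - zs, v⟫ := by
  simpa using hv zs 0 hzs

lemma hpe_norm_sq_le_two_inner (hlam : 0 ≤ lam) (hinner : -ε ≤ ⟪zt - zs, v⟫)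
    (herr : ‖lam • v + zt - w‖ ^ 2 + 2 * lam * ε ≤ σ ^ 2 * ‖zt - w‖ ^ 2) :
    ‖lam • v‖ ^ 2 + (1 - σ ^ 2) * ‖zt - w‖ ^ 2 ≤ 2 * ⟪w - zs, lam • v⟫ := by
  have hexp : ‖lam • v + zt - w‖ ^ 2 = ‖lam • v‖ ^ 2 + 2 * ⟪lam • v, zt - w⟫ + ‖zt - w‖ ^ 2 := by
    rw [add_sub_assoc, norm_add_sq_real]
  have hsplit : ⟪w - zs, lam • v⟫ = lam * ⟪zt - zs, v⟫ - ⟪lam • v, zt - w⟫ := by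
    rw [← sub_sub_sub_cancel_left zs w zt, inner_sub_left, real_inner_smul_right,
      real_inner_comm (lam • v)]
  nlinarith [mul_le_mul_of_nonneg_left hinner hlam]

lemma hpe_norm_smul_le (hσ0 : 0 ≤ σ) (hlam : 0 ≤ lam) (hε : 0 ≤ ε)
    (herr : ‖lam • v + zt - w‖ ^ 2 + 2 * lam * ε ≤ σ ^ 2 * ‖zt - w‖ ^ 2) :
    ‖lam • v‖ ≤ (1 + σ) * ‖zt - w‖ := by
  have hres : ‖lam • v + zt - w‖ ≤ σ * ‖zt - w‖ :=
    (pow_le_pow_iff_left₀ (norm_nonneg _) (by positivity) two_ne_zero).1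
      (by rw [mul_pow]; nlinarith [mul_nonneg hlam hε])
  calc ‖lam • v‖ = ‖(lam • v + zt - w) - (zt - w)‖ := by congr 1; abel
    _ ≤ ‖lam • v + zt - w‖ + ‖zt - w‖ := norm_sub_le _ _
    _ ≤ (1 + σ) * ‖zt - w‖ := by linarith

lemma hpe_relaxed_step {τ η : ℝ} (hσ0 : 0 ≤ σ) (hσ1 : σ < 1) (hτ0 : 0 < τ) (hτ1 : τ ≤ 1)
    (hlam : 0 ≤ lam) (hε : 0 ≤ ε) (hη : η = 2 / ((1 + σ) * τ) - 1)
    (hinner : -ε ≤ ⟪zt - zs, v⟫)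
    (herr : ‖lam • v + zt - w‖ ^ 2 + 2 * lam * ε ≤ σ ^ 2 * ‖zt - w‖ ^ 2) :
    ‖w - (τ * lam) • v - zs‖ ^ 2 +
      τ * max (η * τ * ‖lam • v‖ ^ 2) ((1 - σ ^ 2) * ‖zt - w‖ ^ 2) ≤ ‖w - zs‖ ^ 2 := by
  have hexp : ‖w - (τ * lam) • v - zs‖ ^ 2 =
      ‖w - zs‖ ^ 2 - τ * (2 * ⟪w - zs, lam • v⟫) + τ ^ 2 * ‖lam • v‖ ^ 2 := by
    rw [sub_right_comm, mul_smul, norm_sub_sq_real, real_inner_smul_right, norm_smul,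
      Real.norm_eq_abs, mul_pow, sq_abs]
    ring
  have hdesc := mul_le_mul_of_nonneg_left (hpe_norm_sq_le_two_inner hlam hinner herr) hτ0.le
  have hbound := hpe_norm_smul_le hσ0 hlam hε herr
  have hητ : η * τ * (1 + σ) = 2 - (1 + σ) * τ := by
    rw [hη]; field_simp
  have hmax : max (η * τ * ‖lam • v‖ ^ 2) ((1 - σ ^ 2) * ‖zt - w‖ ^ 2) ≤
      (1 - τ) * ‖lam • v‖ ^ 2 + (1 - σ ^ 2) * ‖zt - w‖ ^ 2 := by
    refine max_le ?_ (by nlinarith [sq_nonneg ‖lam • v‖])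
    have hsq : ‖lam • v‖ ^ 2 ≤ (1 + σ) ^ 2 * ‖zt - w‖ ^ 2 := by
      rw [← mul_pow]; exact pow_le_pow_left₀ (norm_nonneg _) hbound 2
    refine le_of_mul_le_mul_right ?_ (by linarith : (0 : ℝ) < 1 + σ)
    nlinarith [mul_le_mul_of_nonneg_left hsq (by linarith : (0 : ℝ) ≤ 1 - σ)]
  nlinarith [mul_le_mul_of_nonneg_left hmax hτ0.le]

end HPE

lemma eta_mul_one_sub_sq_eq {σ τ η β : ℝ} (hσ0 : 0 ≤ σ) (hβ1 : β < 1)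
    (hτ : τ = 2 * (β - 1) ^ 2 / ((1 + σ) * (2 * (β - 1) ^ 2 + 3 * β - 1)))
    (hη : η = 2 / ((1 + σ) * τ) - 1) :
    η * (1 - β) ^ 2 = β * (1 + β) := by
  have hD : 2 * (β - 1) ^ 2 + 3 * β - 1 ≠ 0 := by nlinarith [sq_nonneg (4 * β - 1)]
  have hβ1' : β - 1 ≠ 0 := by linarith
  subst hη hτ
  field_simp
  ring

lemma mul_one_sub_sq_sub_mul_one_add_pos {η α β : ℝ} (hβ : η * (1 - β) ^ 2 = β * (1 + β))
    (hα0 : 0 ≤ α) (hαβ : α < β) (hβ1 : β < 1) :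
    0 < η * (1 - α) ^ 2 - α * (1 + α) := by
  have hfactor : (η * (1 - α) ^ 2 - α * (1 + α)) * (1 - β) ^ 2 =
      (β - α) * (1 + α + β - 3 * α * β) := by
    linear_combination (1 - α) ^ 2 * hβ
  have hpos : 0 < (β - α) * (1 + α + β - 3 * α * β) := by
    nlinarith [mul_nonneg hα0 (sub_nonneg.2 hβ1.le), mul_pos (sub_pos.2 hαβ) (sub_pos.2 hβ1)]
  exact pos_of_mul_pos_left (hfactor ▸ hpos) (by positivity)

lemma mul_one_sub_sq_sub_pos_of_assumptionA {α σ τ η β β' : ℝ} (hα0 : 0 ≤ α) (hσ0 : 0 ≤ σ)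
    (hσ1 : σ < 1) (hαβ : α < β) (hβ1 : β < 1)
    (hβ' : β' = max β (2 * (1 - σ) / (3 - σ + Real.sqrt (9 + 2 * σ - 7 * σ ^ 2))))
    (hτA : τ = 2 * (β' - 1) ^ 2 / ((1 + σ) * (2 * (β' - 1) ^ 2 + 3 * β' - 1)))
    (hη : η = 2 / ((1 + σ) * τ) - 1) :
    0 < η * (1 - α) ^ 2 - α * (1 + α) := by
  have hsqrt := Real.sqrt_nonneg (9 + 2 * σ - 7 * σ ^ 2)
  have hβ'1 : β' < 1 := hβ' ▸ max_lt hβ1 ((div_lt_one (by linarith)).2 (by linarith))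
  exact mul_one_sub_sq_sub_mul_one_add_pos (eta_mul_one_sub_sq_eq hσ0 hβ'1 hτA hη) hα0
    (hαβ.trans_le (hβ' ▸ le_max_left _ _)) hβ'1

/-- Indexing convention: `z k` is the paper's `z_k` for `k ≥ 0`, the paper's `z_{−1} = z₀` being
encoded by truncated subtraction. -/
theorem stmt12_general
    {H : Type*} [NormedAddCommGroup H] [InnerProductSpace ℝ H]
    (T : H → Set H)
    (α σ τ : ℝ) (hα0 : 0 ≤ α) (hα1 : α < 1) (hσ0 : 0 ≤ σ) (hσ1 : σ < 1)
    (hτ0 : 0 < τ) (hτ1 : τ ≤ 1)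
    (z w ztil v : ℕ → H) (ε lam αs : ℕ → ℝ)
    (hαs : ∀ k, 0 ≤ αs k ∧ αs k ≤ α)
    (hmono : ∀ k, αs k ≤ αs (k + 1))
    (hw : ∀ k, w k = z k + αs k • (z k - z (k - 1)))
    (hlam : ∀ k, 1 ≤ k → 0 < lam k)
    (hεnn : ∀ k, 1 ≤ k → 0 ≤ ε k)
    (hin : ∀ k, 1 ≤ k → v k ∈ enl T (ε k) (ztil k))
    (herr : ∀ k, 1 ≤ k →
      ‖lam k • v k + ztil k - w (k - 1)‖ ^ 2 + 2 * lam k * ε k ≤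
        σ ^ 2 * ‖ztil k - w (k - 1)‖ ^ 2)
    (hz : ∀ k, 1 ≤ k → z k = w (k - 1) - (τ * lam k) • v k)
    -- Assumption (A):
    (β β' : ℝ) (hαβ : α < β) (hβ1 : β < 1)
    (hβ' : β' = max β (2 * (1 - σ) / (3 - σ + Real.sqrt (9 + 2 * σ - 7 * σ ^ 2))))
    (hτA : τ = 2 * (β' - 1) ^ 2 / ((1 + σ) * (2 * (β' - 1) ^ 2 + 3 * β' - 1)))
    (η : ℝ) (hη : η = 2 / ((1 + σ) * τ) - 1)
    (q : ℝ → ℝ) (hq : ∀ t, q t = (η - 1) * t ^ 2 - (1 + 2 * η) * t + η)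
    (zs : H) (hzs : (0 : H) ∈ T zs) :
    ∀ k, 1 ≤ k →
      ‖z k - zs‖ ^ 2 +
        ∑ j ∈ Finset.Icc 1 k,
          τ * max (η * τ * ‖lam j • v j‖ ^ 2) ((1 - σ ^ 2) * ‖ztil j - w (j - 1)‖ ^ 2) ≤
      (1 + 2 * α * (1 + α) / ((1 - α) ^ 2 * q α)) * ‖z 0 - zs‖ ^ 2 := by
  have hQ : 0 < η * (1 - α) * (1 - α) - α * (1 + α) := by
    linarith [mul_one_sub_sq_sub_pos_of_assumptionA hα0 hσ0 hσ1 hαβ hβ1 hβ' hτA hη]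
  have hη0 : 0 ≤ η := by nlinarith [mul_pos (sub_pos.2 hα1) (sub_pos.2 hα1)]
  have hstep : ∀ n, ‖z (n + 1) - zs‖ ^ 2 + τ * max (η * τ * ‖lam (n + 1) • v (n + 1)‖ ^ 2)
      ((1 - σ ^ 2) * ‖ztil (n + 1) - w n‖ ^ 2) ≤ ‖w n - zs‖ ^ 2 := fun n => by
    rw [hz (n + 1) n.succ_pos]
    exact hpe_relaxed_step hσ0 hσ1 hτ0 hτ1 (hlam _ n.succ_pos).le (hεnn _ n.succ_pos) hη
      (inner_sub_ge_of_mem_enl (hin _ n.succ_pos) hzs) (herr _ n.succ_pos)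
  intro k _
  refine (inertial_descent_bound hα0 hα1 (by positivity) hQ hαs (monotone_nat_of_le_succ hmono)
    (fun n => sq_nonneg ‖z n - zs‖) (fun n => sq_nonneg ‖z n - z (n - 1)‖) (by simp)
    (fun n => mul_nonneg hτ0.le (le_max_of_le_right
      (mul_nonneg (by nlinarith) (sq_nonneg _))))
    (fun n => (hstep n).trans ?_) (fun n => ?_) k).trans ?_
  · rw [hw n]
    exact norm_extrapolate_sub_sq_le (hαs n).1 (hαs n).2 _ _ _
  · simp only [Nat.add_sub_cancel]
    rw [hz (n + 1) n.succ_pos, Nat.add_sub_cancel, hw n]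
    exact (relaxed_step_displacement_le hη0 hτ0.le (hαs n).1 (hαs n).2 hα1 _ _ _).trans
      (mul_le_mul_of_nonneg_left (le_max_left _ _) hτ0.le)
  · rw [show q α = η * (1 - α) * (1 - α) - α * (1 + α) by rw [hq]; ring]
    gcongr
    linarith

/-- the summed estimate (Corollary 1) for Algorithm 1 under Assumption (A).
Indexing convention: `z k` is the paper's `z_k` for `k ≥ 0`, the paper's `z_{−1} = z₀` being
encoded by truncated subtraction. -/
theorem stmt12
    {H : Type*} [NormedAddCommGroup H] [InnerProductSpace ℝ H] [CompleteSpace H]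
    (T : H → Set H) (hT : IsMaximalMonotoneOp T)
    (α σ τ : ℝ) (hα0 : 0 ≤ α) (hα1 : α < 1) (hσ0 : 0 ≤ σ) (hσ1 : σ < 1)
    (hτ0 : 0 < τ) (hτ1 : τ ≤ 1)
    (z w ztil v : ℕ → H) (ε lam αs : ℕ → ℝ)
    (hαs : ∀ k, 0 ≤ αs k ∧ αs k ≤ α)
    (hmono : ∀ k, αs k ≤ αs (k + 1))
    (hw : ∀ k, w k = z k + αs k • (z k - z (k - 1)))
    (hlam : ∀ k, 1 ≤ k → 0 < lam k)
    (hεnn : ∀ k, 1 ≤ k → 0 ≤ ε k)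
    (hin : ∀ k, 1 ≤ k → v k ∈ enl T (ε k) (ztil k))
    (herr : ∀ k, 1 ≤ k →
      ‖lam k • v k + ztil k - w (k - 1)‖ ^ 2 + 2 * lam k * ε k ≤
        σ ^ 2 * ‖ztil k - w (k - 1)‖ ^ 2)
    (hz : ∀ k, 1 ≤ k → z k = w (k - 1) - (τ * lam k) • v k)
    -- Assumption (A):
    (β β' : ℝ) (hαβ : α < β) (hβ1 : β < 1)
    (hβ' : β' = max β (2 * (1 - σ) / (3 - σ + Real.sqrt (9 + 2 * σ - 7 * σ ^ 2))))
    (hτA : τ = 2 * (β' - 1) ^ 2 / ((1 + σ) * (2 * (β' - 1) ^ 2 + 3 * β' - 1)))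
    (η : ℝ) (hη : η = 2 / ((1 + σ) * τ) - 1)
    (q : ℝ → ℝ) (hq : ∀ t, q t = (η - 1) * t ^ 2 - (1 + 2 * η) * t + η)
    (zs : H) (hzs : (0 : H) ∈ T zs) :
    ∀ k, 1 ≤ k →
      ‖z k - zs‖ ^ 2 +
        ∑ j ∈ Finset.Icc 1 k,
          τ * max (η * τ * ‖lam j • v j‖ ^ 2) ((1 - σ ^ 2) * ‖ztil j - w (j - 1)‖ ^ 2) ≤
      (1 + 2 * α * (1 + α) / ((1 - α) ^ 2 * q α)) * ‖z 0 - zs‖ ^ 2 :=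
  stmt12_general T α σ τ hα0 hα1 hσ0 hσ1 hτ0 hτ1 z w ztil v ε lam αs hαs hmono hw hlam hεnn hin herr
    hz β β' hαβ hβ1 hβ' hτA η hη q hq zs hzs
end
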